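/- arXiv:2511.21357 — 2 statements merged into one kernel-verified Lean document; each statement's English description precedes it below -/
import Mathlib

section
/- For Legendre polynomials P_m and any u ∈ (0, π): ∫₀^u P_m(cos θ) sin θ / √(cos θ - cos u) dθ = (2√2/(2m+1)) · sin((m + 1/2)u). -/
open Real

/-- The Legendre polynomials (as real functions), via Bonnet's recursion. -/
noncomputable def legendreP : ℕ → ℝ → ℝ
  | 0 => fun _ => 1
  | 1 => fun x => x
  | (n + 2) => fun x =>
      ((2 * (n : ℝ) + 3) * x * legendreP (n + 1) x - ((n : ℝ) + 1) * legendreP n x) / ((n : ℝ) + 2)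

/-!
Substituting `s = √(cos θ - cos u)` turns the integral into `2 ∫₀ᵀ P_m(c + s²) ds`, where
`c = cos u` and `T = √(1 - c) = √2 sin (u/2)`. The linear functional `p ↦ ∫₀ᵀ p(c + s²) ds`
sends `p + 2 (X - c) p'` to `T p(1)`, because this polynomial evaluated at `c + s²` is the
derivative of `s p(c + s²)`. Combined with Bonnet's recursion and
`P'_{m+2} - P'_m = (2m + 3) P_{m+1}`, this shows that `a_m = (2m + 1) ∫₀ᵀ P_m(c + s²) ds`
satisfies `a_{m+2} = 2 cos u · a_{m+1} - a_m`, the recurrence of `√2 sin ((m + 1/2) u)`;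
the two sequences agree for `m = 0, 1`.
-/

open Polynomial

noncomputable def legendrePoly : ℕ → ℝ[X]
  | 0 => 1
  | 1 => X
  | n + 2 => C ((n + 2 : ℝ)⁻¹) *
      ((2 * n + 3 : ℝ[X]) * X * legendrePoly (n + 1) - (n + 1 : ℝ[X]) * legendrePoly n)

theorem mul_legendrePoly_add_two (n : ℕ) :
    (n + 2 : ℝ[X]) * legendrePoly (n + 2) =
      (2 * n + 3 : ℝ[X]) * X * legendrePoly (n + 1) - (n + 1 : ℝ[X]) * legendrePoly n := by
  have h : (n + 2 : ℝ[X]) * C ((n + 2 : ℝ)⁻¹) = 1 := by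
    rw [← map_natCast C n, ← map_ofNat C 2, ← map_add, ← C_mul, mul_inv_cancel₀ (by positivity),
      C_1]
  rw [legendrePoly, ← mul_assoc, h, one_mul]

theorem eval_legendrePoly (n : ℕ) (x : ℝ) : (legendrePoly n).eval x = legendreP n x := by
  induction n using Nat.twoStepInduction with
  | zero => simp [legendrePoly, legendreP]
  | one => simp [legendrePoly, legendreP]
  | more n ih₀ ih₁ =>
    simp only [legendrePoly, legendreP, eval_mul, eval_C, eval_sub, eval_add, eval_X, eval_natCast,
      eval_ofNat, eval_one, ih₀, ih₁]
    field_simp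

theorem eval_one_legendrePoly (n : ℕ) : (legendrePoly n).eval 1 = 1 := by
  induction n using Nat.twoStepInduction with
  | zero => simp [legendrePoly]
  | one => simp [legendrePoly]
  | more n ih₀ ih₁ =>
    have h := congrArg (eval 1) (mul_legendrePoly_add_two n)
    simp only [eval_mul, eval_sub, eval_add, eval_X, eval_natCast, eval_ofNat, eval_one, ih₀,
      ih₁] at h
    apply mul_left_cancel₀ (by positivity : (n + 2 : ℝ) ≠ 0)
    linear_combination h

theorem derivative_legendrePoly_succ (n : ℕ) :
    derivative (legendrePoly (n + 1)) =
      (n + 1 : ℝ[X]) * legendrePoly n + X * derivative (legendrePoly n) ∧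
    X * derivative (legendrePoly (n + 1)) - derivative (legendrePoly n) =
      (n + 1 : ℝ[X]) * legendrePoly (n + 1) := by
  induction n with
  | zero => simp [legendrePoly]
  | succ n ih =>
    obtain ⟨ihA, ihB⟩ := ih
    have hrec := mul_legendrePoly_add_two n
    have hrec' := congrArg derivative hrec
    simp only [derivative_mul, derivative_add, derivative_sub, derivative_natCast, derivative_ofNat,
      derivative_one, derivative_X, zero_mul, zero_add, add_zero, mul_one] at hrec'
    have hA : derivative (legendrePoly (n + 2)) =
        (n + 2 : ℝ[X]) * legendrePoly (n + 1) + X * derivative (legendrePoly (n + 1)) := by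
      apply mul_left_cancel₀ (by norm_cast : (n + 2 : ℝ[X]) ≠ 0)
      linear_combination hrec' + (n + 1) * ihB
    push_cast
    refine ⟨by linear_combination hA, by linear_combination X * hA + X * ihB - ihA - hrec⟩

theorem derivative_legendrePoly_add_two_sub (n : ℕ) :
    derivative (legendrePoly (n + 2)) - derivative (legendrePoly n) =
      (2 * n + 3 : ℝ[X]) * legendrePoly (n + 1) := by
  have hA := (derivative_legendrePoly_succ (n + 1)).1
  have hB := (derivative_legendrePoly_succ n).2
  push_cast at hA
  linear_combination hA + hB

section
variable (c T : ℝ)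

noncomputable def integralCompAddSq : ℝ[X] →ₗ[ℝ] ℝ where
  toFun p := ∫ s in (0 : ℝ)..T, p.eval (c + s ^ 2)
  map_add' p q := by
    simp only [eval_add]
    exact intervalIntegral.integral_add ((by fun_prop : Continuous _).intervalIntegrable _ _)
      ((by fun_prop : Continuous _).intervalIntegrable _ _)
  map_smul' a p := by
    simp only [eval_smul, smul_eq_mul, intervalIntegral.integral_const_mul, RingHom.id_apply]

theorem integralCompAddSq_apply (p : ℝ[X]) :
    integralCompAddSq c T p = ∫ s in (0 : ℝ)..T, p.eval (c + s ^ 2) := rfl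

theorem integralCompAddSq_add_mul_derivative (p : ℝ[X]) :
    integralCompAddSq c T (p + 2 * (X - C c) * derivative p) = T * p.eval (c + T ^ 2) := by
  have hderiv (s : ℝ) : HasDerivAt (fun s => s * p.eval (c + s ^ 2))
      ((p + 2 * (X - C c) * derivative p).eval (c + s ^ 2)) s := by
    refine ((hasDerivAt_id' s).fun_mul
      ((p.hasDerivAt _).comp s ((hasDerivAt_pow 2 s).const_add c))).congr_deriv ?_
    simp only [eval_add, eval_mul, eval_sub, eval_X, eval_C, eval_ofNat, Function.comp_apply]
    ring
  rw [integralCompAddSq_apply,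
    intervalIntegral.integral_eq_sub_of_hasDerivAt (fun s _ => hderiv s)
      ((by fun_prop : Continuous _).intervalIntegrable _ _)]
  simp

theorem integralCompAddSq_legendrePoly_add_two (h : c + T ^ 2 = 1) (m : ℕ) :
    (2 * m + 5) * integralCompAddSq c T (legendrePoly (m + 2)) =
      2 * (2 * m + 3) * c * integralCompAddSq c T (legendrePoly (m + 1)) -
        (2 * m + 1) * integralCompAddSq c T (legendrePoly m) := by
  have key : (2 * m + 5 : ℝ) • legendrePoly (m + 2) -
      (2 * (2 * m + 3) * c) • legendrePoly (m + 1) + (2 * m + 1 : ℝ) • legendrePoly m =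
        (legendrePoly (m + 2) + 2 * (X - C c) * derivative (legendrePoly (m + 2))) -
        (legendrePoly m + 2 * (X - C c) * derivative (legendrePoly m)) := by
    simp only [smul_eq_C_mul, map_add, map_mul, map_natCast, map_ofNat, map_one]
    linear_combination 2 * mul_legendrePoly_add_two m -
      2 * (X - C c) * derivative_legendrePoly_add_two_sub m
  have := congrArg (integralCompAddSq c T) key
  rw [map_sub, integralCompAddSq_add_mul_derivative, integralCompAddSq_add_mul_derivative, h,
    eval_one_legendrePoly, eval_one_legendrePoly] at this
  simp only [map_add, map_sub, map_smul, smul_eq_mul] at this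
  linear_combination this

end

theorem eq_mul_sin_of_recurrence {a : ℕ → ℝ} {A u φ : ℝ} (h₀ : a 0 = A * sin φ)
    (h₁ : a 1 = A * sin (u + φ)) (hrec : ∀ n, a (n + 2) = 2 * cos u * a (n + 1) - a n) (n : ℕ) :
    a n = A * sin (n * u + φ) := by
  induction n using Nat.twoStepInduction with
  | zero => simpa using h₀
  | one => simpa using h₁
  | more n ih₀ ih₁ =>
    rw [hrec, ih₀, ih₁]
    have hadd := sin_add ((n + 1) * u + φ) u
    have hsub := sin_sub ((n + 1) * u + φ) u
    rw [show (n + 1) * u + φ - u = n * u + φ by ring] at hsub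
    push_cast
    rw [show (n + 2) * u + φ = (n + 1) * u + φ + u by ring]
    linear_combination -A * hsub - A * hadd

theorem mul_integralCompAddSq_legendrePoly (u : ℝ) (m : ℕ) :
    (2 * m + 1) * integralCompAddSq (cos u) (√2 * sin (u / 2)) (legendrePoly m) =
      √2 * sin (m * u + u / 2) := by
  set T := √2 * sin (u / 2)
  have hsin : 2 * sin (u / 2) ^ 2 = 1 - cos u := by
    rw [sin_sq_eq_half_sub, show 2 * (u / 2) = u by ring]; ring
  have hT : cos u + T ^ 2 = 1 := by
    rw [mul_pow, sq_sqrt zero_le_two]; linarith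
  have hD (p : ℝ[X]) : integralCompAddSq (cos u) T (p + 2 * (X - C (cos u)) * derivative p) =
      T * p.eval 1 := by
    rw [integralCompAddSq_add_mul_derivative, hT]
  have h₀ : integralCompAddSq (cos u) T 1 = T := by simpa using hD 1
  have h₁ :
      3 * integralCompAddSq (cos u) T X - 2 * cos u * integralCompAddSq (cos u) T 1 = T := by
    have hX :
        X + 2 * (X - C (cos u)) * derivative X = (3 : ℝ) • X - (2 * cos u) • (1 : ℝ[X]) := by
      simp only [derivative_X, smul_eq_C_mul, map_mul, map_ofNat, mul_one]
      ring
    have := hD X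
    rwa [hX, map_sub, map_smul, map_smul, smul_eq_mul, smul_eq_mul, eval_X, mul_one] at this
  have hsin_three_halves : sin (u + u / 2) = sin (u / 2) * (1 + 2 * cos u) := by
    have hsin_u : sin u = 2 * sin (u / 2) * cos (u / 2) := by
      rw [← sin_two_mul, show 2 * (u / 2) = u by ring]
    rw [sin_add, hsin_u]
    linear_combination 2 * sin (u / 2) * cos_sq' (u / 2) - sin (u / 2) * hsin
  refine eq_mul_sin_of_recurrence
    (a := fun m => (2 * m + 1) * integralCompAddSq (cos u) T (legendrePoly m)) ?_ ?_ ?_ m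
  · simpa [legendrePoly] using h₀
  · simp only [legendrePoly, hsin_three_halves]
    linear_combination h₁ + 2 * cos u * h₀
  · intro n
    have := integralCompAddSq_legendrePoly_add_two (cos u) T hT n
    push_cast
    linear_combination this

theorem intervalIntegrable_sin_div_sqrt_cos_sub {u : ℝ} (hu₀ : 0 ≤ u) (huπ : u ≤ π) :
    IntervalIntegrable (fun θ => sin θ / √(cos θ - cos u)) MeasureTheory.volume 0 u := by
  refine intervalIntegral.intervalIntegrable_deriv_of_nonneg
    (g := fun θ => -2 * √(cos θ - cos u)) (by fun_prop) (fun θ hθ => ?_) (fun θ hθ => ?_)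
  all_goals rw [min_eq_left hu₀, max_eq_right hu₀] at hθ
  · have hpos : 0 < cos θ - cos u := sub_pos.2 (cos_lt_cos_of_nonneg_of_le_pi hθ.1.le huπ hθ.2)
    refine ((((hasDerivAt_cos θ).sub_const _).sqrt hpos.ne').const_mul (-2)).congr_deriv ?_
    field_simp
  · exact div_nonneg (sin_nonneg_of_nonneg_of_le_pi hθ.1.le (hθ.2.le.trans huπ)) (sqrt_nonneg _)

theorem integral_comp_cos_mul_sin_div_sqrt {f : ℝ → ℝ} (hf : Continuous f) {u : ℝ}
    (hu₀ : 0 ≤ u) (huπ : u ≤ π) :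
    ∫ θ in (0 : ℝ)..u, f (cos θ) * sin θ / √(cos θ - cos u) =
      2 * ∫ s in (0 : ℝ)..√(1 - cos u), f (cos u + s ^ 2) := by
  set c := cos u
  set Q := fun t => ∫ s in (0 : ℝ)..t, f (c + s ^ 2)
  have hQ (t : ℝ) : HasDerivAt Q (f (c + t ^ 2)) t :=
    ((hf.comp (by fun_prop)).integral_hasStrictDerivAt 0 t).hasDerivAt
  have hderiv : ∀ θ ∈ Set.Ioo 0 u, HasDerivAt (fun θ => -2 * Q √(cos θ - c))
      (f (cos θ) * sin θ / √(cos θ - c)) θ := by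
    intro θ hθ
    have hpos : 0 < cos θ - c := sub_pos.2 (cos_lt_cos_of_nonneg_of_le_pi hθ.1.le huπ hθ.2)
    refine (((hQ _).comp θ (((hasDerivAt_cos θ).sub_const c).sqrt hpos.ne')).const_mul
      (-2)).congr_deriv ?_
    rw [sq_sqrt hpos.le, add_sub_cancel]
    field_simp
  have hint : IntervalIntegrable (fun θ => f (cos θ) * sin θ / √(cos θ - c))
      MeasureTheory.volume 0 u := by
    simp_rw [mul_div_assoc]
    exact (intervalIntegrable_sin_div_sqrt_cos_sub hu₀ huπ).continuousOn_mul (by fun_prop)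
  rw [intervalIntegral.integral_eq_sub_of_hasDerivAt_of_le hu₀ (by fun_prop) hderiv hint]
  simp [Q, c]

theorem stmt_4 (m : ℕ) (u : ℝ) (hu0 : 0 < u) (huπ : u < π) :
    ∫ θ in (0 : ℝ)..u, legendreP m (Real.cos θ) * Real.sin θ / Real.sqrt (Real.cos θ - Real.cos u)
      = (2 * Real.sqrt 2 / (2 * (m : ℝ) + 1)) * Real.sin (((m : ℝ) + 1 / 2) * u) := by
  have hT : √(1 - cos u) = √2 * sin (u / 2) := by
    rw [sin_half_eq_sqrt hu0.le (by linarith [pi_pos]), ← sqrt_mul zero_le_two]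
    ring_nf
  have key := mul_integralCompAddSq_legendrePoly u m
  rw [← hT, integralCompAddSq_apply] at key
  simp_rw [← eval_legendrePoly]
  rw [integral_comp_cos_mul_sin_div_sqrt (legendrePoly m).continuous hu0.le huπ.le]
  rw [show ((m : ℝ) + 1 / 2) * u = m * u + u / 2 by ring, div_mul_eq_mul_div,
    eq_div_iff (by positivity)]
  linear_combination 2 * key
end

section
/- Under the regularity condition sup_l Σ_m |M_{lm}| ≤ q < 1 with bounded (B_l), the solutions X^{(n)} of the truncated n×n systems X_l^{(n)} − Σ_{m≤n} M_{lm} X_m^{(n)} = B_l (l ≤ n) exist, are uniformly bounded by ‖B‖∞/(1−q), and converge componentwise as n → ∞ to the unique ℓ∞-solution of the infinite system. -/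
open Real Set Filter Topology
open scoped Matrix

/-!
Each truncated system reads `x = b + A x` with `‖A‖ ≤ q < 1` in the sup norm, so the Banach fixed
point theorem solves it uniquely, and `‖x‖ ≤ ‖b‖ + q ‖x‖` gives the uniform bound `C`.
Extended by zero, the truncated solutions thus lie in the cube `[-C, C]^ℕ`, compact in the product
topology. Row `l` of the infinite system passes to cluster points, since `Z ↦ ∑' m, M l m * Z m` is
continuous on the cube (Weierstrass M-test). So every cluster point is a bounded solution, hence
equals `X`, and a sequence in a compact set with `X` as its only cluster point converges to `X`.
-/

section FiniteSystem

variable {E : Type*} [NormedAddCommGroup E] {A : E →+ E} {q : ℝ}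

theorem norm_le_div_one_sub_of_sub_map_eq (hq : q < 1) (hA : ∀ x, ‖A x‖ ≤ q * ‖x‖)
    {x b : E} (hx : x - A x = b) : ‖x‖ ≤ ‖b‖ / (1 - q) := by
  have h : ‖x‖ ≤ ‖b‖ + q * ‖x‖ := calc
    ‖x‖ = ‖b + A x‖ := by rw [← hx, sub_add_cancel]
    _ ≤ ‖b‖ + q * ‖x‖ := (norm_add_le _ _).trans (add_le_add_right (hA x) _)
  rw [le_div_iff₀ (sub_pos.2 hq)]
  linarith

theorem existsUnique_sub_map_eq [CompleteSpace E] (hq0 : 0 ≤ q) (hq : q < 1)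
    (hA : ∀ x, ‖A x‖ ≤ q * ‖x‖) (b : E) : ∃! x, x - A x = b := by
  have hT : ContractingWith ⟨q, hq0⟩ fun x => A x + b := by
    refine ⟨hq, LipschitzWith.of_dist_le_mul fun x y => ?_⟩
    rw [dist_eq_norm, dist_eq_norm, add_sub_add_right_eq_sub, ← map_sub]
    exact hA (x - y)
  refine ⟨hT.fixedPoint _, ?_, fun y hy => hT.fixedPoint_unique ?_⟩
  · exact sub_eq_iff_eq_add'.2 (hT.fixedPoint_isFixedPt).symm
  · exact (sub_eq_iff_eq_add'.1 hy).symm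

end FiniteSystem

theorem Matrix.norm_mulVec_le_of_sum_abs_le {ι κ : Type*} [Fintype ι] [Fintype κ]
    {A : Matrix ι κ ℝ} {q : ℝ} (hq0 : 0 ≤ q) (hA : ∀ i, ∑ j, |A i j| ≤ q) (v : κ → ℝ) :
    ‖A *ᵥ v‖ ≤ q * ‖v‖ := by
  refine (pi_norm_le_iff_of_nonneg (by positivity)).2 fun i => ?_
  calc ‖(A *ᵥ v) i‖ = |∑ j, A i j * v j| := rfl
    _ ≤ ∑ j, |A i j| * ‖v‖ := by
      refine (Finset.abs_sum_le_sum_abs _ _).trans (Finset.sum_le_sum fun j _ => ?_)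
      rw [abs_mul]
      exact mul_le_mul_of_nonneg_left (norm_le_pi_norm v j) (abs_nonneg _)
    _ = (∑ j, |A i j|) * ‖v‖ := by rw [Finset.sum_mul]
    _ ≤ q * ‖v‖ := mul_le_mul_of_nonneg_right (hA i) (norm_nonneg v)

section InfiniteSystem

variable {ι : Type*}

theorem continuousOn_tsum_mul_apply {a : ι → ℝ} (ha : Summable fun m => |a m|) (C : ℝ) :
    ContinuousOn (fun Z : ι → ℝ => ∑' m, a m * Z m) (univ.pi fun _ => Icc (-C) C) :=
  continuousOn_tsum (fun m => (continuous_const.mul (continuous_apply m)).continuousOn)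
    (ha.mul_right C) fun m Z hZ => by
      rw [norm_mul, norm_eq_abs, norm_eq_abs]
      exact mul_le_mul_of_nonneg_left (abs_le.2 (hZ m (mem_univ m))) (abs_nonneg _)

theorem tendsto_of_bounded_of_eventually_solves {M : ι → ι → ℝ} {B X : ι → ℝ}
    (hM : ∀ l, Summable fun m => |M l m|)
    (hX : ∀ Y : ι → ℝ, BddAbove (range fun l => |Y l|) →
      (∀ l, Y l - ∑' m, M l m * Y m = B l) → Y = X)
    {α : Type*} {L : Filter α} {f : α → ι → ℝ} {C : ℝ} (hfC : ∀ a l, |f a l| ≤ C)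
    (hf : ∀ l, ∀ᶠ a in L, f a l - ∑' m, M l m * f a m = B l) : Tendsto f L (𝓝 X) := by
  set K : Set (ι → ℝ) := univ.pi fun _ => Icc (-C) C
  have hfK : ∀ a, f a ∈ K := fun a l _ => abs_le.1 (hfC a l)
  refine (isCompact_univ_pi fun _ => isCompact_Icc).tendsto_nhds_of_unique_mapClusterPt
    (Eventually.of_forall hfK) fun Y hYK hY =>
      hX Y ⟨C, forall_mem_range.2 fun l => abs_le.2 (hYK l (mem_univ l))⟩ fun l => ?_
  have hclosed : IsClosed (K ∩ (fun Z => Z l - ∑' m, M l m * Z m) ⁻¹' {B l}) :=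
    ContinuousOn.preimage_isClosed_of_isClosed
      ((continuous_apply l).continuousOn.sub (continuousOn_tsum_mul_apply (hM l) C))
      (isClosed_set_pi fun _ _ => isClosed_Icc) isClosed_singleton
  exact (hclosed.mem_of_mapClusterPt hY ((hf l).mono fun a ha => ⟨hfK a, ha⟩)).2

end InfiniteSystem

theorem tsum_mul_dite_lt {n : ℕ} (g : ℕ → ℝ) (v : Fin n → ℝ) :
    ∑' m, g m * (if h : m < n then v ⟨m, h⟩ else 0) = ∑ m : Fin n, g m * v m := by
  rw [tsum_eq_sum (s := Finset.range n) fun m hm => by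
    simp [dif_neg (Finset.mem_range.not.1 hm)], ← Fin.sum_univ_eq_sum_range]
  simp

theorem stmt_13_general (M : ℕ → ℕ → ℝ) (B : ℕ → ℝ) (q : ℝ) (hq : q < 1)
    (hreg : ∀ l : ℕ, Summable (fun m => |M l m|) ∧ (∑' m : ℕ, |M l m|) ≤ q)
    (hB : BddAbove (Set.range fun l : ℕ => |B l|))
    (X : ℕ → ℝ)
    (hXuniq : ∀ Y : ℕ → ℝ, BddAbove (Set.range fun l : ℕ => |Y l|) →
      (∀ l : ℕ, Y l - ∑' m : ℕ, M l m * Y m = B l) → Y = X) :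
    ∃ Xn : (n : ℕ) → Fin (n + 1) → ℝ,
      (∀ n : ℕ, ∀ l : Fin (n + 1),
        Xn n l - ∑ m : Fin (n + 1), M l m * Xn n m = B l) ∧
      (∀ n : ℕ, ∀ Y : Fin (n + 1) → ℝ,
        (∀ l : Fin (n + 1), Y l - ∑ m : Fin (n + 1), M l m * Y m = B l) → Y = Xn n) ∧
      (∀ n : ℕ, ∀ l : Fin (n + 1), |Xn n l| ≤ (⨆ l : ℕ, |B l|) / (1 - q)) ∧
      (∀ l : ℕ, Tendsto (fun n : ℕ =>
        if h : l < n + 1 then Xn n ⟨l, h⟩ else 0) atTop (nhds (X l))) := by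
  have hq0 : 0 ≤ q := (tsum_nonneg fun m => abs_nonneg (M 0 m)).trans (hreg 0).2
  have hrow (n : ℕ) (l : Fin (n + 1)) : ∑ m : Fin (n + 1), |M l m| ≤ q := by
    rw [Fin.sum_univ_eq_sum_range (fun m => |M l m|)]
    exact ((hreg l).1.sum_le_tsum _ fun m _ => abs_nonneg _).trans (hreg l).2
  choose Xn hXn hXn_unique using fun n => existsUnique_sub_map_eq
    (A := (Matrix.of fun l m : Fin (n + 1) => M l m).mulVecLin.toAddMonoidHom) hq0 hq
    (Matrix.norm_mulVec_le_of_sum_abs_le hq0 (hrow n)) fun l => B l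
  set C := (⨆ l, |B l|) / (1 - q)
  have hbound (n : ℕ) (l : Fin (n + 1)) : |Xn n l| ≤ C := by
    refine (norm_le_pi_norm (Xn n) l).trans ((norm_le_div_one_sub_of_sub_map_eq hq
      (Matrix.norm_mulVec_le_of_sum_abs_le hq0 (hrow n)) (hXn n)).trans ?_)
    refine div_le_div_of_nonneg_right ?_ (sub_pos.2 hq).le
    exact (pi_norm_le_iff_of_nonneg ((abs_nonneg _).trans (le_ciSup hB 0))).2 fun l =>
      le_ciSup hB l
  set Xext : ℕ → ℕ → ℝ := fun n m => if h : m < n + 1 then Xn n ⟨m, h⟩ else 0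
  have hXext_bound (n m : ℕ) : |Xext n m| ≤ C := by
    by_cases hm : m < n + 1
    · simpa only [Xext, dif_pos hm] using hbound n ⟨m, hm⟩
    · simpa only [Xext, dif_neg hm, abs_zero] using (abs_nonneg _).trans (hbound 0 0)
  have hXext_solves (l : ℕ) : ∀ᶠ n in atTop, Xext n l - ∑' m, M l m * Xext n m = B l := by
    filter_upwards [eventually_ge_atTop l] with n hn
    simp only [Xext, tsum_mul_dite_lt, dif_pos (Nat.lt_succ_of_le hn)]
    exact congrFun (hXn n) _
  exact ⟨Xn, fun n => congrFun (hXn n), fun n Y hY => hXn_unique n Y (funext hY), hbound,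
    fun l => tendsto_pi_nhds.1 (tendsto_of_bounded_of_eventually_solves (fun l => (hreg l).1)
      hXuniq hXext_bound hXext_solves) l⟩

theorem stmt_13 (M : ℕ → ℕ → ℝ) (B : ℕ → ℝ) (q : ℝ) (hq : q < 1)
    (hreg : ∀ l : ℕ, Summable (fun m => |M l m|) ∧ (∑' m : ℕ, |M l m|) ≤ q)
    (hB : BddAbove (Set.range fun l : ℕ => |B l|))
    (X : ℕ → ℝ)
    (hXbdd : BddAbove (Set.range fun l : ℕ => |X l|))
    (hXsol : ∀ l : ℕ, X l - ∑' m : ℕ, M l m * X m = B l)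
    (hXuniq : ∀ Y : ℕ → ℝ, BddAbove (Set.range fun l : ℕ => |Y l|) →
      (∀ l : ℕ, Y l - ∑' m : ℕ, M l m * Y m = B l) → Y = X) :
    ∃ Xn : (n : ℕ) → Fin (n + 1) → ℝ,
      (∀ n : ℕ, ∀ l : Fin (n + 1),
        Xn n l - ∑ m : Fin (n + 1), M l m * Xn n m = B l) ∧
      (∀ n : ℕ, ∀ Y : Fin (n + 1) → ℝ,
        (∀ l : Fin (n + 1), Y l - ∑ m : Fin (n + 1), M l m * Y m = B l) → Y = Xn n) ∧
      (∀ n : ℕ, ∀ l : Fin (n + 1), |Xn n l| ≤ (⨆ l : ℕ, |B l|) / (1 - q)) ∧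
      (∀ l : ℕ, Tendsto (fun n : ℕ =>
        if h : l < n + 1 then Xn n ⟨l, h⟩ else 0) atTop (nhds (X l))) :=
  stmt_13_general M B q hq hreg hB X hXuniq
end
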